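/- (Phase transition time bound.) For GD on separable logistic regression with w₀ = 0 and stepsize η > 0, let τ = (60/γ²) max{η, n, e, ((η+n)/η)·ln((η+n)/η)}. Then there exists a step s ≤ τ such that L(w_s) ≤ 1/η and F(w_s) ≤ 1, where F(w) = (1/n) Σᵢ exp(−xᵢᵀw). -/

import Mathlib

open Finset

/-- The average logistic loss L(w) = (1/n) Σᵢ ln(1 + exp(−⟨xᵢ, w⟩)). -/
noncomputable def logisticRisk {d n : ℕ} (x : Fin n → EuclideanSpace ℝ (Fin d))
    (w : EuclideanSpace ℝ (Fin d)) : ℝ :=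
  (1 / n) * ∑ i, Real.log (1 + Real.exp (-(inner ℝ (x i) w : ℝ)))

/-- The gradient ∇L(w) = (1/n) Σᵢ ℓ′(⟨xᵢ,w⟩) xᵢ with ℓ′(s) = −1/(1+eˢ). -/
noncomputable def logisticGrad {d n : ℕ} (x : Fin n → EuclideanSpace ℝ (Fin d))
    (w : EuclideanSpace ℝ (Fin d)) : EuclideanSpace ℝ (Fin d) :=
  (n : ℝ)⁻¹ • ∑ i, (-(1 + Real.exp ((inner ℝ (x i) w : ℝ)))⁻¹) • x i

/-- The gradient potential G(w) = (1/n) Σᵢ 1/(1 + exp(⟨xᵢ, w⟩)). -/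
noncomputable def gradPotential {d n : ℕ} (x : Fin n → EuclideanSpace ℝ (Fin d))
    (w : EuclideanSpace ℝ (Fin d)) : ℝ :=
  (1 / n) * ∑ i, (1 + Real.exp ((inner ℝ (x i) w : ℝ)))⁻¹

/-- The exponential potential F(w) = (1/n) Σᵢ exp(−⟨xᵢ, w⟩). -/
noncomputable def expPotential {d n : ℕ} (x : Fin n → EuclideanSpace ℝ (Fin d))
    (w : EuclideanSpace ℝ (Fin d)) : ℝ :=
  (1 / n) * ∑ i, Real.exp (-(inner ℝ (x i) w : ℝ))

lemma aux_log_le_div_e (y : ℝ) (hy : 0 < y) : Real.log y ≤ y / Real.exp 1 := by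
  have h := Real.log_le_sub_one_of_pos (x := y / Real.exp 1) (by positivity)
  rw [Real.log_div (ne_of_gt hy) (by positivity), Real.log_exp] at h
  linarith

lemma aux_sv (s ε : ℝ) (hε : 0 < ε) :
    s * (1 + Real.exp s)⁻¹ ≤ (1 + Real.exp s)⁻¹ * Real.log ε⁻¹ + ε / Real.exp 1 := by
  have hes : (0:ℝ) < 1 + Real.exp s := by positivity
  have h1 : s ≤ Real.log (1 + Real.exp s) := by
    have := Real.exp_pos s
    calc s = Real.log (Real.exp s) := (Real.log_exp s).symm
    _ ≤ Real.log (1 + Real.exp s) := Real.log_le_log (by positivity) (by linarith)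
  have h2 : s * (1 + Real.exp s)⁻¹ ≤ Real.log (1 + Real.exp s) * (1 + Real.exp s)⁻¹ := by
    apply mul_le_mul_of_nonneg_right h1 (by positivity)
  have h3 : Real.log (1 + Real.exp s) = Real.log ε⁻¹ + Real.log ((1 + Real.exp s) * ε) := by
    rw [Real.log_mul (ne_of_gt hes) (ne_of_gt hε), Real.log_inv]; ring
  have h4 : Real.log ((1 + Real.exp s) * ε) * (1 + Real.exp s)⁻¹ ≤ ε / Real.exp 1 := by
    have := aux_log_le_div_e ((1 + Real.exp s) * ε) (by positivity)
    calc Real.log ((1 + Real.exp s) * ε) * (1 + Real.exp s)⁻¹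
        ≤ ((1 + Real.exp s) * ε / Real.exp 1) * (1 + Real.exp s)⁻¹ := by
          apply mul_le_mul_of_nonneg_right this (by positivity)
      _ = ε / Real.exp 1 := by field_simp
  calc s * (1 + Real.exp s)⁻¹ ≤ Real.log (1 + Real.exp s) * (1 + Real.exp s)⁻¹ := h2
    _ = (1 + Real.exp s)⁻¹ * Real.log ε⁻¹ + Real.log ((1 + Real.exp s) * ε) * (1 + Real.exp s)⁻¹ := by
        rw [h3]; ring
    _ ≤ (1 + Real.exp s)⁻¹ * Real.log ε⁻¹ + ε / Real.exp 1 := by linarith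

lemma grad_inner {d n : ℕ} (x : Fin n → EuclideanSpace ℝ (Fin d))
    (w u : EuclideanSpace ℝ (Fin d)) :
    (inner ℝ (logisticGrad x w) u : ℝ) =
      (n : ℝ)⁻¹ * ∑ i, (-(1 + Real.exp ((inner ℝ (x i) w : ℝ)))⁻¹) * (inner ℝ (x i) u : ℝ) := by
  rw [logisticGrad, real_inner_smul_left, sum_inner]
  congr 1
  exact Finset.sum_congr rfl fun i _ => real_inner_smul_left _ _ _

lemma gradPotential_nonneg {d n : ℕ} (x : Fin n → EuclideanSpace ℝ (Fin d))
    (w : EuclideanSpace ℝ (Fin d)) : 0 ≤ gradPotential x w := by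
  unfold gradPotential
  apply mul_nonneg (by positivity)
  exact Finset.sum_nonneg fun i _ => by positivity

lemma gradPotential_le_one {d n : ℕ} (hn : 0 < n) (x : Fin n → EuclideanSpace ℝ (Fin d))
    (w : EuclideanSpace ℝ (Fin d)) : gradPotential x w ≤ 1 := by
  unfold gradPotential
  have : ∑ i : Fin n, (1 + Real.exp ((inner ℝ (x i) w : ℝ)))⁻¹ ≤ ∑ i : Fin n, 1 := by
    apply Finset.sum_le_sum
    intro i _
    rw [inv_le_one_iff₀]
    right; nlinarith [Real.exp_pos ((inner ℝ (x i) w : ℝ))]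
  have h2 : (∑ i : Fin n, (1:ℝ)) = n := by simp
  rw [div_mul_eq_mul_div, one_mul, div_le_one (by exact_mod_cast hn)]
  linarith [h2 ▸ this]

lemma norm_grad_le {d n : ℕ} (x : Fin n → EuclideanSpace ℝ (Fin d))
    (hx : ∀ i, ‖x i‖ ≤ 1) (w : EuclideanSpace ℝ (Fin d)) :
    ‖logisticGrad x w‖ ≤ gradPotential x w := by
  unfold logisticGrad gradPotential
  rw [norm_smul]
  calc ‖(n:ℝ)⁻¹‖ * ‖∑ i, (-(1 + Real.exp ((inner ℝ (x i) w : ℝ)))⁻¹) • x i‖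
      ≤ (n:ℝ)⁻¹ * ∑ i, (1 + Real.exp ((inner ℝ (x i) w : ℝ)))⁻¹ := by
        apply mul_le_mul
        · simp [abs_of_nonneg]
        · refine (norm_sum_le _ _).trans ?_
          apply Finset.sum_le_sum
          intro i _
          rw [norm_smul]
          have h1 : (0:ℝ) < 1 + Real.exp ((inner ℝ (x i) w : ℝ)) := by positivity
          have : ‖(-(1 + Real.exp ((inner ℝ (x i) w : ℝ)))⁻¹)‖
              = (1 + Real.exp ((inner ℝ (x i) w : ℝ)))⁻¹ := by
            rw [norm_neg, Real.norm_eq_abs, abs_of_pos (by positivity)]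
          rw [this]
          calc (1 + Real.exp ((inner ℝ (x i) w : ℝ)))⁻¹ * ‖x i‖
              ≤ (1 + Real.exp ((inner ℝ (x i) w : ℝ)))⁻¹ * 1 :=
                mul_le_mul_of_nonneg_left (hx i) (by positivity)
            _ = _ := mul_one _
        · positivity
        · positivity
    _ = (1 / n) * ∑ i, (1 + Real.exp ((inner ℝ (x i) w : ℝ)))⁻¹ := by rw [one_div]

lemma grad_inner_wstar {d n : ℕ} (x : Fin n → EuclideanSpace ℝ (Fin d))
    (γ : ℝ) (wstar : EuclideanSpace ℝ (Fin d))
    (hmargin : ∀ i, γ ≤ (inner ℝ (x i) wstar : ℝ)) (w : EuclideanSpace ℝ (Fin d)) :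
    (inner ℝ (logisticGrad x w) wstar : ℝ) ≤ -(γ * gradPotential x w) := by
  rw [grad_inner, gradPotential]
  have h : ∑ i, (-(1 + Real.exp ((inner ℝ (x i) w : ℝ)))⁻¹) * (inner ℝ (x i) wstar : ℝ)
      ≤ ∑ i, (-γ) * (1 + Real.exp ((inner ℝ (x i) w : ℝ)))⁻¹ := by
    apply Finset.sum_le_sum
    intro i _
    have hv : (0:ℝ) ≤ (1 + Real.exp ((inner ℝ (x i) w : ℝ)))⁻¹ := by positivity
    nlinarith [hmargin i]
  calc (n : ℝ)⁻¹ * ∑ i, (-(1 + Real.exp ((inner ℝ (x i) w : ℝ)))⁻¹) * (inner ℝ (x i) wstar : ℝ)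
      ≤ (n : ℝ)⁻¹ * ∑ i, (-γ) * (1 + Real.exp ((inner ℝ (x i) w : ℝ)))⁻¹ :=
        mul_le_mul_of_nonneg_left h (by positivity)
    _ = (n : ℝ)⁻¹ * ((-γ) * ∑ i, (1 + Real.exp ((inner ℝ (x i) w : ℝ)))⁻¹) := by
        rw [← Finset.mul_sum]
    _ = -(γ * ((1/n) * ∑ i, (1 + Real.exp ((inner ℝ (x i) w : ℝ)))⁻¹)) := by ring

lemma grad_inner_self {d n : ℕ} (hn : 0 < n) (x : Fin n → EuclideanSpace ℝ (Fin d))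
    (ε : ℝ) (hε : 0 < ε) (w : EuclideanSpace ℝ (Fin d)) :
    -(Real.log ε⁻¹ * gradPotential x w + ε / Real.exp 1)
      ≤ (inner ℝ (logisticGrad x w) w : ℝ) := by
  rw [grad_inner, gradPotential]
  have hn' : (0:ℝ) < n := by exact_mod_cast hn
  have h : ∑ i, ((inner ℝ (x i) w : ℝ) * (1 + Real.exp ((inner ℝ (x i) w : ℝ)))⁻¹)
      ≤ (∑ i, (1 + Real.exp ((inner ℝ (x i) w : ℝ)))⁻¹) * Real.log ε⁻¹ + n * (ε / Real.exp 1) := by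
    have := Finset.sum_le_sum (fun i (_ : i ∈ Finset.univ) =>
      aux_sv ((inner ℝ (x i) w : ℝ)) ε hε)
    rw [Finset.sum_add_distrib, Finset.sum_const, Finset.card_univ, Fintype.card_fin,
      ← Finset.sum_mul] at this
    calc _ ≤ _ := this
      _ = _ := by ring
  have key : (n : ℝ)⁻¹ * ∑ i, (-(1 + Real.exp ((inner ℝ (x i) w : ℝ)))⁻¹) * (inner ℝ (x i) w : ℝ)
      = -((n : ℝ)⁻¹ * ∑ i, ((inner ℝ (x i) w : ℝ) * (1 + Real.exp ((inner ℝ (x i) w : ℝ)))⁻¹)) := by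
    have e : ∑ i, (-(1 + Real.exp ((inner ℝ (x i) w : ℝ)))⁻¹) * (inner ℝ (x i) w : ℝ)
        = -∑ i, ((inner ℝ (x i) w : ℝ) * (1 + Real.exp ((inner ℝ (x i) w : ℝ)))⁻¹) := by
      rw [← Finset.sum_neg_distrib]
      exact Finset.sum_congr rfl fun i _ => by ring
    rw [e]; ring
  rw [key, neg_le_neg_iff]
  calc (n : ℝ)⁻¹ * ∑ i, ((inner ℝ (x i) w : ℝ) * (1 + Real.exp ((inner ℝ (x i) w : ℝ)))⁻¹)
      ≤ (n : ℝ)⁻¹ * ((∑ i, (1 + Real.exp ((inner ℝ (x i) w : ℝ)))⁻¹) * Real.log ε⁻¹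
          + n * (ε / Real.exp 1)) := mul_le_mul_of_nonneg_left h (by positivity)
    _ = Real.log ε⁻¹ * ((1/n) * ∑ i, (1 + Real.exp ((inner ℝ (x i) w : ℝ)))⁻¹) + ε / Real.exp 1 := by
        field_simp

lemma arith_tau (η nn : ℝ) (hη : 0 < η) (hnn : 1 ≤ nn) :
    8 * max η nn * Real.log (2 * max η nn) + 2 * max η nn * η
      ≤ 60 * η * max (max η nn)
          (max (Real.exp 1) (((η + nn) / η) * Real.log ((η + nn) / η))) := by
  set X := max (max η nn) (max (Real.exp 1) (((η + nn) / η) * Real.log ((η + nn) / η))) with hX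
  have hXη : η ≤ X := le_trans (le_max_left _ _) (le_max_left _ _)
  have hXn : nn ≤ X := le_trans (le_max_right _ _) (le_max_left _ _)
  have hXe : Real.exp 1 ≤ X := le_trans (le_max_left _ _) (le_max_right _ _)
  have hXQ : ((η + nn) / η) * Real.log ((η + nn) / η) ≤ X :=
    le_trans (le_max_right _ _) (le_max_right _ _)
  have he : (2.7:ℝ) < Real.exp 1 := by
    have := Real.exp_one_gt_d9; linarith
  have hX0 : (0:ℝ) < X := lt_trans (by norm_num) (lt_of_lt_of_le he hXe)
  rcases le_total nn η with hc | hc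
  · rw [max_eq_left hc]
    have hη1 : 1 ≤ η := le_trans hnn hc
    have hl : Real.log (2 * η) ≤ 0.7 + η := by
      rw [Real.log_mul (by norm_num) (by positivity)]
      have h2 : Real.log 2 < 0.6931471808 := Real.log_two_lt_d9
      have h3 : Real.log η ≤ η - 1 := Real.log_le_sub_one_of_pos (by positivity)
      linarith
    have h8 : 8 * η * Real.log (2 * η) ≤ 8 * η * (0.7 + η) :=
      mul_le_mul_of_nonneg_left hl (by positivity)
    nlinarith [mul_le_mul_of_nonneg_left hXη hη.le, mul_le_mul_of_nonneg_left hXe hη.le,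
      mul_pos hη hX0]
  · rw [max_eq_right hc]
    have hr : 1 ≤ nn / η := (one_le_div hη).mpr hc
    have hl : Real.log (2 * nn) ≤ Real.log (nn / η) + 2 * η := by
      have e1 : Real.log (2 * nn) = Real.log (nn / η) + Real.log (2 * η) := by
        rw [Real.log_div (by positivity) (by positivity),
          Real.log_mul (by norm_num) (by positivity),
          Real.log_mul (by norm_num) (by positivity)]
        ring
      have h3 : Real.log (2 * η) ≤ 2 * η - 1 := Real.log_le_sub_one_of_pos (by positivity)
      linarith
    have hQ' : nn * Real.log (nn / η) ≤ η * X := by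
      have hlog0 : 0 ≤ Real.log (nn / η) := Real.log_nonneg hr
      have step1 : nn / η ≤ (η + nn) / η :=
        (div_le_div_iff_of_pos_right hη).mpr (by linarith)
      have step2 : (nn / η) * Real.log (nn / η) ≤ ((η + nn) / η) * Real.log ((η + nn) / η) := by
        calc (nn / η) * Real.log (nn / η) ≤ ((η + nn) / η) * Real.log (nn / η) :=
              mul_le_mul_of_nonneg_right step1 hlog0
          _ ≤ ((η + nn) / η) * Real.log ((η + nn) / η) := by
              apply mul_le_mul_of_nonneg_left
                (Real.log_le_log (by positivity) step1) (by positivity)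
      have e2 : nn * Real.log (nn / η) = η * ((nn / η) * Real.log (nn / η)) := by
        field_simp
      rw [e2]
      calc η * ((nn / η) * Real.log (nn / η))
          ≤ η * (((η + nn) / η) * Real.log ((η + nn) / η)) :=
            mul_le_mul_of_nonneg_left step2 hη.le
        _ ≤ η * X := mul_le_mul_of_nonneg_left hXQ hη.le
    have h1 : 8 * nn * Real.log (2 * nn) ≤ 8 * nn * (Real.log (nn / η) + 2 * η) :=
      mul_le_mul_of_nonneg_left hl (by positivity)
    have h3 : nn * η ≤ X * η := mul_le_mul_of_nonneg_right hXn hη.le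
    nlinarith [mul_pos hη hX0]

set_option maxHeartbeats 2000000 in
/-- phase transition time bound. -/
theorem gd_phase_transition_time {d n : ℕ} (hn : 0 < n)
    (x : Fin n → EuclideanSpace ℝ (Fin d)) (hx : ∀ i, ‖x i‖ ≤ 1)
    (γ : ℝ) (hγ : 0 < γ) (wstar : EuclideanSpace ℝ (Fin d)) (hws : ‖wstar‖ = 1)
    (hmargin : ∀ i, γ ≤ (inner ℝ (x i) wstar : ℝ))
    (η : ℝ) (hη : 0 < η) (w : ℕ → EuclideanSpace ℝ (Fin d))
    (hw0 : w 0 = 0)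
    (hgd : ∀ t, w (t + 1) = w t - η • logisticGrad x (w t)) :
    ∃ s : ℕ, (s : ℝ) ≤ (60 / γ ^ 2) *
        max (max η (n : ℝ))
          (max (Real.exp 1) (((η + n) / η) * Real.log ((η + n) / η))) ∧
      logisticRisk x (w s) ≤ 1 / η ∧ expPotential x (w s) ≤ 1 := by
  have hn1 : (1:ℝ) ≤ n := by exact_mod_cast hn
  have hn0 : (0:ℝ) < n := by linarith
  set X := max (max η (n:ℝ)) (max (Real.exp 1) (((η + n) / η) * Real.log ((η + n) / η)))
    with hXdef
  set M := max η (n:ℝ) with hMdef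
  have hMη : η ≤ M := le_max_left _ _
  have hMn : (n:ℝ) ≤ M := le_max_right _ _
  have hM1 : (1:ℝ) ≤ M := le_trans hn1 hMn
  have hM0 : (0:ℝ) < M := lt_of_lt_of_le one_pos hM1
  set ε := (2 * M)⁻¹ with hεdef
  have hε0 : 0 < ε := by positivity
  have hεinv : ε⁻¹ = 2 * M := by rw [hεdef, inv_inv]
  have hlogε : (0:ℝ) < Real.log ε⁻¹ := by
    rw [hεinv]; apply Real.log_pos; linarith
  have he1 : (2.7:ℝ) < Real.exp 1 := by have := Real.exp_one_gt_d9; linarith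
  have hXe : Real.exp 1 ≤ X := le_trans (le_max_left _ _) (le_max_right _ _)
  have hX0 : (0:ℝ) < X := by linarith
  have hγ2 : (0:ℝ) < γ ^ 2 := by positivity
  set τ := (60 / γ ^ 2) * X with hτdef
  have hτ0 : (0:ℝ) ≤ τ := by positivity
  have hinve : 1 / Real.exp 1 ≤ Real.log ε⁻¹ := by
    rw [hεinv]
    have h2 : (0.6931471803:ℝ) < Real.log 2 := Real.log_two_gt_d9
    have h3 : Real.log 2 ≤ Real.log (2 * M) :=
      Real.log_le_log (by norm_num) (by linarith)
    have h4 : 1 / Real.exp 1 ≤ 1 / 2.7 :=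
      one_div_le_one_div_of_le (by norm_num) he1.le
    linarith
  -- main claim: some step before ⌊τ⌋ has small gradient potential
  have main : ∃ s, s ≤ Nat.floor τ ∧ gradPotential x (w s) ≤ ε := by
    by_contra hcon
    push_neg at hcon
    set T := Nat.floor τ + 1 with hTdef
    have hGpos : ∀ t : ℕ, 0 ≤ gradPotential x (w t) := fun t => gradPotential_nonneg x (w t)
    have hGle1 : ∀ t : ℕ, gradPotential x (w t) ≤ 1 := fun t => gradPotential_le_one hn x (w t)
    have P1 : ∀ t : ℕ, η * γ * ∑ k ∈ Finset.range t, gradPotential x (w k)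
        ≤ (inner ℝ (w t) wstar : ℝ) := by
      intro t
      induction t with
      | zero => simp [hw0]
      | succ t ih =>
        rw [hgd t, Finset.sum_range_succ, inner_sub_left, real_inner_smul_left]
        have h := grad_inner_wstar x γ wstar hmargin (w t)
        have h2 := mul_le_mul_of_nonneg_left h hη.le
        nlinarith [ih]
    have P2 : ∀ t : ℕ, ‖w t‖ ^ 2 ≤ ∑ k ∈ Finset.range t,
        (2 * η * (Real.log ε⁻¹ * gradPotential x (w k) + ε / Real.exp 1)
          + η ^ 2 * gradPotential x (w k)) := by
      intro t
      induction t with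
      | zero => simp [hw0]
      | succ t ih =>
        rw [hgd t, Finset.sum_range_succ, norm_sub_sq_real]
        have hns : ‖η • logisticGrad x (w t)‖ ^ 2 ≤ η ^ 2 * gradPotential x (w t) := by
          rw [norm_smul, mul_pow, Real.norm_eq_abs, sq_abs]
          apply mul_le_mul_of_nonneg_left ?_ (sq_nonneg η)
          nlinarith [norm_grad_le x hx (w t), norm_nonneg (logisticGrad x (w t)),
            hGle1 t, hGpos t]
        have hip : -(η * (Real.log ε⁻¹ * gradPotential x (w t) + ε / Real.exp 1))
            ≤ (inner ℝ (w t) (η • logisticGrad x (w t)) : ℝ) := by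
          rw [real_inner_smul_right]
          have h := grad_inner_self hn x ε hε0 (w t)
          rw [real_inner_comm] at h
          nlinarith [mul_le_mul_of_nonneg_left h hη.le]
        linarith [ih]
    set S := ∑ k ∈ Finset.range T, gradPotential x (w k) with hSdef
    have hT0 : (0:ℝ) < (T:ℝ) := by
      rw [hTdef]; push_cast; positivity
    have hTS : (T:ℝ) * ε ≤ S := by
      rw [hSdef]
      calc (T:ℝ) * ε = ∑ _k ∈ Finset.range T, ε := by
            rw [Finset.sum_const, Finset.card_range, nsmul_eq_mul]
        _ ≤ _ := Finset.sum_le_sum fun k hk =>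
            (hcon k (Nat.lt_succ_iff.mp (Finset.mem_range.mp hk))).le
    have hS0 : 0 < S := lt_of_lt_of_le (by positivity) hTS
    have hwT1 : η * γ * S ≤ ‖w T‖ := by
      refine le_trans (P1 T) ?_
      calc (inner ℝ (w T) wstar : ℝ) ≤ ‖w T‖ * ‖wstar‖ := real_inner_le_norm _ _
        _ = ‖w T‖ := by rw [hws, mul_one]
    have hwT2 : ‖w T‖ ^ 2 ≤ 4 * η * Real.log ε⁻¹ * S + η ^ 2 * S := by
      refine le_trans (P2 T) ?_
      have e1 : ∑ k ∈ Finset.range T,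
          (2 * η * (Real.log ε⁻¹ * gradPotential x (w k) + ε / Real.exp 1)
            + η ^ 2 * gradPotential x (w k))
          = 2 * η * Real.log ε⁻¹ * S + η ^ 2 * S + (T:ℝ) * (2 * η * (ε / Real.exp 1)) := by
        rw [hSdef]
        rw [show (∑ k ∈ Finset.range T,
            (2 * η * (Real.log ε⁻¹ * gradPotential x (w k) + ε / Real.exp 1)
              + η ^ 2 * gradPotential x (w k)))
            = ∑ k ∈ Finset.range T,
              ((2 * η * Real.log ε⁻¹ + η ^ 2) * gradPotential x (w k)
                + 2 * η * (ε / Real.exp 1)) from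
          Finset.sum_congr rfl fun k _ => by ring]
        rw [Finset.sum_add_distrib, ← Finset.mul_sum, Finset.sum_const, Finset.card_range,
          nsmul_eq_mul]
        ring
      have h5 : (T:ℝ) * (2 * η * (ε / Real.exp 1)) ≤ 2 * η * Real.log ε⁻¹ * S := by
        have hTe : (T:ℝ) * ε * (1 / Real.exp 1) ≤ S * Real.log ε⁻¹ :=
          mul_le_mul hTS hinve (by positivity) hS0.le
        calc (T:ℝ) * (2 * η * (ε / Real.exp 1))
            = 2 * η * ((T:ℝ) * ε * (1 / Real.exp 1)) := by ring
          _ ≤ 2 * η * (S * Real.log ε⁻¹) :=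
              mul_le_mul_of_nonneg_left hTe (by positivity)
          _ = 2 * η * Real.log ε⁻¹ * S := by ring
      rw [e1]
      linarith [h5]
    have hCS : (η * γ * S) ^ 2 ≤ ‖w T‖ ^ 2 :=
      pow_le_pow_left₀ (by positivity) hwT1 2
    have hSB : η * γ ^ 2 * S ≤ 4 * Real.log ε⁻¹ + η := by
      nlinarith [mul_pos hη hS0, hCS, hwT2]
    have hTB : η * γ ^ 2 * ((T:ℝ) * ε) ≤ 4 * Real.log ε⁻¹ + η := by
      refine le_trans ?_ hSB
      have := mul_le_mul_of_nonneg_left hTS (by positivity : (0:ℝ) ≤ η * γ ^ 2)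
      linarith
    have harith := arith_tau η (n:ℝ) hη hn1
    rw [← hMdef, ← hXdef] at harith
    have hfin : 4 * Real.log ε⁻¹ + η ≤ η * γ ^ 2 * (τ * ε) := by
      rw [hεinv]
      have e2 : η * γ ^ 2 * (τ * ε) = 30 * η * X / M := by
        rw [hτdef, hεdef]; field_simp; ring
      rw [e2, le_div_iff₀ hM0]
      nlinarith [harith]
    have hTτ : τ < (T:ℝ) := by
      rw [hTdef]; push_cast; exact Nat.lt_floor_add_one τ
    have hlast : η * γ ^ 2 * (τ * ε) < η * γ ^ 2 * ((T:ℝ) * ε) := by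
      apply mul_lt_mul_of_pos_left ?_ (by positivity)
      exact mul_lt_mul_of_pos_right hTτ hε0
    linarith [hTB, hfin, hlast]
  obtain ⟨s, hsN, hGs⟩ := main
  have hε2n : ε ≤ (2 * (n:ℝ))⁻¹ := by
    rw [hεdef]
    exact inv_anti₀ (by positivity) (by linarith)
  have hkey2 : ∀ i, Real.exp (-(inner ℝ (x i) (w s) : ℝ))
      ≤ 2 * (1 + Real.exp ((inner ℝ (x i) (w s) : ℝ)))⁻¹ := by
    intro i
    have h1 : (0:ℝ) < 1 + Real.exp ((inner ℝ (x i) (w s) : ℝ)) := by positivity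
    have hterm : (1/(n:ℝ)) * (1 + Real.exp ((inner ℝ (x i) (w s) : ℝ)))⁻¹ ≤ ε := by
      refine le_trans ?_ hGs
      rw [gradPotential]
      apply mul_le_mul_of_nonneg_left ?_ (by positivity)
      exact Finset.single_le_sum
        (f := fun j => (1 + Real.exp ((inner ℝ (x j) (w s) : ℝ)))⁻¹)
        (fun j _ => by positivity) (Finset.mem_univ i)
    have hv2 : (1 + Real.exp ((inner ℝ (x i) (w s) : ℝ)))⁻¹ ≤ 1/2 := by
      have h6 : (1/(n:ℝ)) * (1 + Real.exp ((inner ℝ (x i) (w s) : ℝ)))⁻¹ ≤ (2 * (n:ℝ))⁻¹ :=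
        le_trans hterm hε2n
      have e3 : (1 + Real.exp ((inner ℝ (x i) (w s) : ℝ)))⁻¹
          = (n:ℝ) * ((1/(n:ℝ)) * (1 + Real.exp ((inner ℝ (x i) (w s) : ℝ)))⁻¹) := by
        field_simp
      rw [e3]
      calc (n:ℝ) * ((1/(n:ℝ)) * (1 + Real.exp ((inner ℝ (x i) (w s) : ℝ)))⁻¹)
          ≤ (n:ℝ) * (2 * (n:ℝ))⁻¹ := mul_le_mul_of_nonneg_left h6 hn0.le
        _ = 1/2 := by field_simp
    have hz1 : (1:ℝ) ≤ Real.exp ((inner ℝ (x i) (w s) : ℝ)) := by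
      by_contra hlt
      push_neg at hlt
      have h7 : (1:ℝ)/2 < (1 + Real.exp ((inner ℝ (x i) (w s) : ℝ)))⁻¹ := by
        rw [show ((1:ℝ)/2) = (2:ℝ)⁻¹ by norm_num]
        exact inv_strictAnti₀ h1 (by linarith)
      linarith
    have hprod : Real.exp (-(inner ℝ (x i) (w s) : ℝ))
        * (1 + Real.exp ((inner ℝ (x i) (w s) : ℝ)))
        = Real.exp (-(inner ℝ (x i) (w s) : ℝ)) + 1 := by
      rw [mul_add, mul_one, ← Real.exp_add]
      simp
    have hmz : Real.exp (-(inner ℝ (x i) (w s) : ℝ)) ≤ 1 := by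
      rw [Real.exp_neg]
      exact inv_le_one_of_one_le₀ hz1
    calc Real.exp (-(inner ℝ (x i) (w s) : ℝ))
        = (Real.exp (-(inner ℝ (x i) (w s) : ℝ)) * (1 + Real.exp ((inner ℝ (x i) (w s) : ℝ))))
          * (1 + Real.exp ((inner ℝ (x i) (w s) : ℝ)))⁻¹ := by
          field_simp
      _ ≤ 2 * (1 + Real.exp ((inner ℝ (x i) (w s) : ℝ)))⁻¹ := by
          apply mul_le_mul_of_nonneg_right ?_ (by positivity)
          rw [hprod]; linarith
  have hF2G : expPotential x (w s) ≤ 2 * gradPotential x (w s) := by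
    rw [expPotential, gradPotential]
    calc (1/(n:ℝ)) * ∑ i, Real.exp (-(inner ℝ (x i) (w s) : ℝ))
        ≤ (1/(n:ℝ)) * ∑ i, 2 * (1 + Real.exp ((inner ℝ (x i) (w s) : ℝ)))⁻¹ :=
          mul_le_mul_of_nonneg_left (Finset.sum_le_sum fun i _ => hkey2 i) (by positivity)
      _ = 2 * ((1/(n:ℝ)) * ∑ i, (1 + Real.exp ((inner ℝ (x i) (w s) : ℝ)))⁻¹) := by
          rw [← Finset.mul_sum]; ring
  have hFε : expPotential x (w s) ≤ 2 * ε := by linarith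
  have h2ε : 2 * ε = M⁻¹ := by rw [hεdef, mul_inv]; ring
  rw [h2ε] at hFε
  have hFη : expPotential x (w s) ≤ 1 / η := by
    have : M⁻¹ ≤ 1 / η := by rw [one_div]; exact inv_anti₀ hη hMη
    linarith
  have hF1 : expPotential x (w s) ≤ 1 := by
    have : M⁻¹ ≤ 1 := inv_le_one_of_one_le₀ hM1
    linarith
  have hLF : logisticRisk x (w s) ≤ expPotential x (w s) := by
    rw [logisticRisk, expPotential]
    apply mul_le_mul_of_nonneg_left ?_ (by positivity)
    apply Finset.sum_le_sum
    intro i _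
    have hp : (0:ℝ) < 1 + Real.exp (-(inner ℝ (x i) (w s) : ℝ)) := by positivity
    have := Real.log_le_sub_one_of_pos hp
    linarith
  refine ⟨s, ?_, le_trans hLF hFη, hF1⟩
  calc (s:ℝ) ≤ (Nat.floor τ : ℝ) := Nat.cast_le.mpr hsN
    _ ≤ τ := Nat.floor_le hτ0
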